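/- Let n ≥ 1 be an integer, let q satisfy 1 < q < ∞ if n ∈ {1,2} and 1 < q < n/(n−2) if n ≥ 3, and let μ₁, μ₂ ≤ 0 and β₁, β₂ > 0 satisfy μ₁·β₁^{q−1} = μ₂·β₂^{q−1}, β₁^{(q−2)/2}·μ₁ + β₂^{q/2} > 0 and β₂^{(q−2)/2}·μ₂ + β₁^{q/2} > 0, with μ₁, μ₂ < 0. Then every positive solution (u,v) of the system −u''(r) − ((n−1)/r) u'(r) + u(r) = μ₁·u(r)^{2q−1} + β₁·u(r)^{q−1} v(r)^q and −v''(r) − ((n−1)/r) v'(r) + v(r) = μ₂·v(r)^{2q−1} + β₂·u(r)^q v(r)^{q−1} for r > 0, with u'(0) = v'(0) = 0 and u(r), v(r) → 0 as r → ∞, satisfies u = (μ₂ + β₁^{q/2}·β₂^{−(q−2)/2})^{1/(2q−2)} · (μ₁ + β₂^{q/2}·β₁^{−(q−2)/2})^{−1/(2q−2)} · v. -/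

import Mathlib

/-!
Put `t = √(β₁/β₂)` and `w = u - t v`. The relation `μ₁ β₁^(q-1) = μ₂ β₂^(q-1)` says
`μ₂ = μ₁ t^(2q-2)`, and then `w` solves `-w'' - ((n-1)/r) w' + w = g` with `w g ≤ 0`, because
`s ↦ s^(2q-1)` is increasing and `μ₁ < 0`. This forces `w = 0` by a maximum principle: at a
positive maximum of `w` on `[0, ∞)` (which exists since `w → 0`) one has `w' = 0` and `w'' ≤ 0`,
while the equation gives `w'' > 0`; at the origin the term `w'(r)/r` tends to `w''(0)`.
The constant in the statement is just `t` written out.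
-/

open Real Set Filter

/-- `u` is twice continuously differentiable on `[0,∞)`, with first and second
derivative functions `u'` and `u''`. -/
def C2 (u u' u'' : ℝ → ℝ) : Prop :=
  (∀ r ∈ Set.Ici (0:ℝ), HasDerivWithinAt u (u' r) (Set.Ici 0) r) ∧
  (∀ r ∈ Set.Ici (0:ℝ), HasDerivWithinAt u' (u'' r) (Set.Ici 0) r) ∧
  ContinuousOn u'' (Set.Ici 0)

/-- `(u,v)` (with derivative data) is a positive solution of the Ma–Zhao system
`-u'' - ((n-1)/r) u' + u = μ₁ u^{2q-1} + β₁ u^{q-1} v^q`,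
`-v'' - ((n-1)/r) v' + v = μ₂ v^{2q-1} + β₂ u^q v^{q-1}` on `(0,∞)`,
with `u'(0) = v'(0) = 0`, `u, v > 0` and `u(r), v(r) → 0` as `r → ∞`. -/
def IsPosSolMZ (n : ℕ) (q μ₁ μ₂ β₁ β₂ : ℝ) (u u' u'' v v' v'' : ℝ → ℝ) : Prop :=
  C2 u u' u'' ∧ C2 v v' v'' ∧
  (∀ r : ℝ, 0 ≤ r → 0 < u r ∧ 0 < v r) ∧
  (∀ r : ℝ, 0 < r → -u'' r - ((n : ℝ) - 1) / r * u' r + u r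
      = μ₁ * u r ^ (2 * q - 1) + β₁ * u r ^ (q - 1) * v r ^ q) ∧
  (∀ r : ℝ, 0 < r → -v'' r - ((n : ℝ) - 1) / r * v' r + v r
      = μ₂ * v r ^ (2 * q - 1) + β₂ * u r ^ q * v r ^ (q - 1)) ∧
  u' 0 = 0 ∧ v' 0 = 0 ∧
  Tendsto u atTop (nhds 0) ∧ Tendsto v atTop (nhds 0)


open Topology

namespace C2

variable {u u' u'' v v' v'' : ℝ → ℝ}

lemma continuousOn (hu : C2 u u' u'') : ContinuousOn u (Ici 0) :=
  fun r hr ↦ (hu.1 r hr).continuousWithinAt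

lemma neg (hu : C2 u u' u'') : C2 (-u) (-u') (-u'') :=
  ⟨fun r hr ↦ (hu.1 r hr).neg, fun r hr ↦ (hu.2.1 r hr).neg, hu.2.2.neg⟩

lemma sub (hu : C2 u u' u'') (hv : C2 v v' v'') : C2 (u - v) (u' - v') (u'' - v'') :=
  ⟨fun r hr ↦ (hu.1 r hr).sub (hv.1 r hr), fun r hr ↦ (hu.2.1 r hr).sub (hv.2.1 r hr),
    hu.2.2.sub hv.2.2⟩

lemma const_smul (c : ℝ) (hu : C2 u u' u'') : C2 (c • u) (c • u') (c • u'') :=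
  ⟨fun r hr ↦ (hu.1 r hr).const_smul c, fun r hr ↦ (hu.2.1 r hr).const_smul c,
    hu.2.2.const_smul c⟩

end C2

lemma eventually_pos_of_hasDerivWithinAt_Ioi {f : ℝ → ℝ} {f' x : ℝ}
    (hf : HasDerivWithinAt f f' (Ioi x) x) (hx : f x = 0) (hf' : 0 < f') :
    ∀ᶠ y in 𝓝[>] x, 0 < f y := by
  have hslope := (hasDerivWithinAt_iff_tendsto_slope' (lt_irrefl x)).mp hf
  filter_upwards [hslope.eventually (eventually_gt_nhds hf'), self_mem_nhdsWithin]
    with y hy hxy using pos_of_slope_pos hxy hy hx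

lemma C2.second_deriv_nonpos_of_isMaxOn {w w' w'' : ℝ → ℝ} {x : ℝ} (hw : C2 w w' w'') (hx : 0 ≤ x)
    (hmax : IsMaxOn w (Ici 0) x) (hw'x : w' x = 0) : w'' x ≤ 0 := by
  by_contra! hpos
  have hIoi : Ioi x ⊆ Ici 0 := fun y hy ↦ le_of_lt (lt_of_le_of_lt hx hy)
  obtain ⟨b, hxb, hb⟩ := mem_nhdsGT_iff_exists_Ioo_subset.mp <|
    eventually_pos_of_hasDerivWithinAt_Ioi ((hw.2.1 x hx).mono hIoi) hw'x hpos
  have hmono : StrictMonoOn w (Icc x b) := by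
    refine strictMonoOn_of_hasDerivWithinAt_pos (f' := w') (convex_Icc x b)
      (hw.continuousOn.mono fun y hy ↦ hx.trans hy.1) (fun y hy ↦ ?_) (fun y hy ↦ ?_)
    · rw [interior_Icc] at hy ⊢
      exact ((hw.1 y (hIoi hy.1)).mono (Ioo_subset_Ioi_self.trans hIoi))
    · rw [interior_Icc] at hy
      exact hb hy
  have hlt := hmono (left_mem_Icc.mpr hxb.le) (right_mem_Icc.mpr hxb.le) hxb
  exact (hmax (hIoi hxb)).not_gt hlt

lemma ContinuousOn.exists_isMaxOn_Ici_of_tendsto_zero {w : ℝ → ℝ} (hw : ContinuousOn w (Ici 0))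
    (hlim : Tendsto w atTop (𝓝 0)) {r₀ : ℝ} (hr₀ : 0 ≤ r₀) (hpos : 0 < w r₀) :
    ∃ x, 0 ≤ x ∧ IsMaxOn w (Ici 0) x := by
  refine hw.exists_isMaxOn' isClosed_Ici hr₀ ?_
  rw [cocompact_eq_atBot_atTop, inf_sup_right, (disjoint_atBot_principal_Ici (0 : ℝ)).eq_bot,
    bot_sup_eq]
  exact (hlim.eventually (ge_mem_nhds hpos)).filter_mono inf_le_left

section RadialEquation

variable {a : ℝ} {w w' w'' g : ℝ → ℝ}

/-- The equation `-w'' - (a/r) w' + w = g` extends to `r = 0`, where `w'(r)/r → w''(0)`. -/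
lemma one_add_mul_eq_of_radial_eq (hw : C2 w w' w'') (hw'0 : w' 0 = 0)
    (hg : ContinuousWithinAt g (Ici 0) 0)
    (heq : ∀ r, 0 < r → -w'' r - a / r * w' r + w r = g r) :
    (1 + a) * w'' 0 = w 0 - g 0 := by
  have hquot : Tendsto (fun r ↦ w' r / r) (𝓝[>] 0) (𝓝 (w'' 0)) := by
    have := (hasDerivWithinAt_iff_tendsto_slope' (lt_irrefl 0)).mp
      ((hw.2.1 0 self_mem_Ici).mono Ioi_subset_Ici_self)
    exact this.congr fun r ↦ by rw [slope_def_field, hw'0, sub_zero, sub_zero]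
  have hw'' : Tendsto w'' (𝓝[>] 0) (𝓝 (w'' 0)) :=
    (hw.2.2 0 self_mem_Ici).mono Ioi_subset_Ici_self
  have hw_cont : Tendsto w (𝓝[>] 0) (𝓝 (w 0)) :=
    (hw.1 0 self_mem_Ici).continuousWithinAt.mono Ioi_subset_Ici_self
  have hlhs : Tendsto (fun r ↦ -w'' r - a * (w' r / r) + w r - g r) (𝓝[>] 0)
      (𝓝 (-w'' 0 - a * w'' 0 + w 0 - g 0)) :=
    ((hw''.neg.sub (hquot.const_mul a)).add hw_cont).sub (hg.mono Ioi_subset_Ici_self)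
  have hzero : Tendsto (fun r ↦ -w'' r - a * (w' r / r) + w r - g r) (𝓝[>] 0) (𝓝 0) := by
    refine tendsto_const_nhds.congr' ?_
    filter_upwards [self_mem_nhdsWithin] with r (hr : 0 < r)
    rw [← heq r hr]
    ring
  linarith [tendsto_nhds_unique hlhs hzero]

theorem nonpos_of_radial_eq (ha : -1 ≤ a) (hw : C2 w w' w'') (hw'0 : w' 0 = 0)
    (hlim : Tendsto w atTop (𝓝 0)) (hg : ContinuousWithinAt g (Ici 0) 0)
    (heq : ∀ r, 0 < r → -w'' r - a / r * w' r + w r = g r)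
    (hsign : ∀ r, 0 ≤ r → w r * g r ≤ 0) :
    ∀ r, 0 ≤ r → w r ≤ 0 := by
  by_contra! ⟨r₀, hr₀, hpos⟩
  obtain ⟨x, hx, hmax⟩ := hw.continuousOn.exists_isMaxOn_Ici_of_tendsto_zero hlim hr₀ hpos
  have hwx : 0 < w x := hpos.trans_le (hmax hr₀)
  have hgx : g x ≤ 0 := nonpos_of_mul_nonpos_right (hsign x hx) hwx
  rcases hx.eq_or_lt with rfl | hx
  · have hw''0 := hw.second_deriv_nonpos_of_isMaxOn le_rfl hmax hw'0
    have h0 := one_add_mul_eq_of_radial_eq hw hw'0 hg heq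
    nlinarith
  · have hnhds : Ici (0 : ℝ) ∈ 𝓝 x := Ici_mem_nhds hx
    have hw'x : w' x = 0 :=
      (hmax.isLocalMax hnhds).hasDerivAt_eq_zero ((hw.1 x hx.le).hasDerivAt hnhds)
    have hw''x := hw.second_deriv_nonpos_of_isMaxOn hx.le hmax hw'x
    have hx_eq := heq x hx
    rw [hw'x] at hx_eq
    linarith

theorem eq_zero_of_radial_eq (ha : -1 ≤ a) (hw : C2 w w' w'') (hw'0 : w' 0 = 0)
    (hlim : Tendsto w atTop (𝓝 0)) (hg : ContinuousWithinAt g (Ici 0) 0)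
    (heq : ∀ r, 0 < r → -w'' r - a / r * w' r + w r = g r)
    (hsign : ∀ r, 0 ≤ r → w r * g r ≤ 0) :
    ∀ r, 0 ≤ r → w r = 0 := by
  have hneg := nonpos_of_radial_eq (w := -w) (g := -g) ha hw.neg (by simp [hw'0])
    (by rw [← neg_zero]; exact hlim.neg) hg.neg (fun r hr ↦ by simp [← heq r hr]; ring)
    (fun r hr ↦ by simpa using hsign r hr)
  intro r hr
  exact le_antisymm (nonpos_of_radial_eq ha hw hw'0 hlim hg heq hsign r hr)
    (neg_nonpos.mp (hneg r hr))

end RadialEquation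

lemma sub_mul_rpow_sub_rpow_nonneg {x y p : ℝ} (hx : 0 ≤ x) (hy : 0 ≤ y) (hp : 0 ≤ p) :
    0 ≤ (x - y) * (x ^ p - y ^ p) := by
  rcases le_total x y with h | h
  · exact mul_nonneg_of_nonpos_of_nonpos (sub_nonpos.mpr h)
      (sub_nonpos.mpr (rpow_le_rpow hx h hp))
  · exact mul_nonneg (sub_nonneg.mpr h) (sub_nonneg.mpr (rpow_le_rpow hy h hp))

/-- With `x = u r`, `y = v r`, `β₁ = β₂ t²` and `μ₂ = μ₁ t^(2q-2)`, the bracket is the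
right-hand side of the equation for `u - t v`. -/
lemma sub_mul_coupling_nonpos {q μ₁ β₂ t x y : ℝ} (hq : 1 ≤ 2 * q) (hμ₁ : μ₁ ≤ 0) (hβ₂ : 0 ≤ β₂)
    (ht : 0 < t) (hx : 0 < x) (hy : 0 < y) :
    (x - t * y) * ((μ₁ * x ^ (2 * q - 1) + β₂ * t ^ 2 * x ^ (q - 1) * y ^ q)
      - t * (μ₁ * t ^ (2 * q - 2) * y ^ (2 * q - 1) + β₂ * x ^ q * y ^ (q - 1))) ≤ 0 := by
  have hxq : x ^ q = x ^ (q - 1) * x := by rw [← rpow_add_one hx.ne', sub_add_cancel]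
  have hyq : y ^ q = y ^ (q - 1) * y := by rw [← rpow_add_one hy.ne', sub_add_cancel]
  have hty : (t * y) ^ (2 * q - 1) = t ^ (2 * q - 2) * t * y ^ (2 * q - 1) := by
    rw [mul_rpow ht.le hy.le, ← rpow_add_one ht.ne']
    ring_nf
  have hmono := sub_mul_rpow_sub_rpow_nonneg hx.le (mul_pos ht hy).le (by linarith : 0 ≤ 2 * q - 1)
  have hcoupling : 0 ≤ β₂ * t * x ^ (q - 1) * y ^ (q - 1) * (x - t * y) ^ 2 := by positivity
  calc _ = μ₁ * ((x - t * y) * (x ^ (2 * q - 1) - (t * y) ^ (2 * q - 1)))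
        - β₂ * t * x ^ (q - 1) * y ^ (q - 1) * (x - t * y) ^ 2 := by
        rw [hxq, hyq, hty]
        ring
    _ ≤ 0 := by nlinarith [mul_nonpos_of_nonpos_of_nonneg hμ₁ hmono]

theorem IsPosSolMZ.eq_const_mul {n : ℕ} {q μ₁ μ₂ β₁ β₂ t : ℝ} {u u' u'' v v' v'' : ℝ → ℝ}
    (hsol : IsPosSolMZ n q μ₁ μ₂ β₁ β₂ u u' u'' v v' v'') (hq : 1 ≤ 2 * q) (hμ₁ : μ₁ ≤ 0)
    (hβ₂ : 0 ≤ β₂) (ht : 0 < t) (hβ₁ : β₁ = β₂ * t ^ 2) (hμ₂ : μ₂ = μ₁ * t ^ (2 * q - 2)) :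
    ∀ r, 0 ≤ r → u r = t * v r := by
  obtain ⟨hu, hv, hpos, hequ, heqv, hu'0, hv'0, hulim, hvlim⟩ := hsol
  subst hβ₁ hμ₂
  have hu0 := hu.continuousOn 0 self_mem_Ici
  have hv0 := hv.continuousOn 0 self_mem_Ici
  have hg : ContinuousWithinAt
      (fun r ↦ (μ₁ * u r ^ (2 * q - 1) + β₂ * t ^ 2 * u r ^ (q - 1) * v r ^ q)
        - t * (μ₁ * t ^ (2 * q - 2) * v r ^ (2 * q - 1) + β₂ * u r ^ q * v r ^ (q - 1)))
      (Ici 0) 0 := by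
    obtain ⟨hu0_pos, hv0_pos⟩ := hpos 0 le_rfl
    fun_prop (disch := exact Or.inl (ne_of_gt (by assumption)))
  have hw := eq_zero_of_radial_eq (a := (n : ℝ) - 1) (w := u - t • v) (by simp)
    (hu.sub (hv.const_smul t)) (by simp [hu'0, hv'0])
    (by convert hulim.sub (hvlim.const_mul t) using 2 <;> simp) hg
    (fun r hr ↦ by
      simp only [Pi.sub_apply, Pi.smul_apply, smul_eq_mul]
      linear_combination hequ r hr - t * heqv r hr)
    (fun r hr ↦ sub_mul_coupling_nonpos hq hμ₁ hβ₂ ht (hpos r hr).1 (hpos r hr).2)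
  intro r hr
  simpa [sub_eq_zero] using hw r hr

lemma rpow_eq_of_eq_mul_sq {β₁ β₂ t : ℝ} (hβ₂ : 0 ≤ β₂) (ht : 0 ≤ t) (h : β₁ = β₂ * t ^ 2)
    (s : ℝ) : β₁ ^ s = β₂ ^ s * t ^ (2 * s) := by
  rw [h, mul_rpow hβ₂ (sq_nonneg t), ← rpow_natCast_mul ht]
  norm_num

lemma proportionality_constant_eq {q μ₁ μ₂ β₁ β₂ t : ℝ} (hq : q ≠ 1) (hβ₂ : 0 < β₂) (ht : 0 < t)
    (hβ₁ : β₁ = β₂ * t ^ 2) (hμ₂ : μ₂ = μ₁ * t ^ (2 * q - 2))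
    (hpos : 0 < β₁ ^ ((q - 2) / 2) * μ₁ + β₂ ^ (q / 2)) :
    (μ₂ + β₁ ^ (q / 2) * β₂ ^ (-(q - 2) / 2)) ^ (1 / (2 * q - 2)) *
      (μ₁ + β₂ ^ (q / 2) * β₁ ^ (-(q - 2) / 2)) ^ (-(1 / (2 * q - 2))) = t := by
  set B := μ₁ + β₂ ^ (q / 2) * β₁ ^ (-(q - 2) / 2) with hB_def
  have hβ₁_pos : 0 < β₁ := hβ₁ ▸ by positivity
  have hB : 0 < B := by
    have hinv : β₁ ^ (-(q - 2) / 2) * β₁ ^ ((q - 2) / 2) = 1 := by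
      rw [← rpow_add hβ₁_pos, neg_div, neg_add_cancel, rpow_zero]
    have := mul_pos (rpow_pos_of_pos hβ₁_pos (-(q - 2) / 2)) hpos
    linear_combination this + μ₁ * hinv
  have ht_exp : t ^ (2 * q - 2) * t ^ (2 * (-(q - 2) / 2)) = t ^ (2 * (q / 2)) := by
    rw [← rpow_add ht]
    ring_nf
  have hA : μ₂ + β₁ ^ (q / 2) * β₂ ^ (-(q - 2) / 2) = t ^ (2 * q - 2) * B := by
    rw [hμ₂, hB_def, rpow_eq_of_eq_mul_sq hβ₂.le ht.le hβ₁, rpow_eq_of_eq_mul_sq hβ₂.le ht.le hβ₁]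
    linear_combination -(β₂ ^ (q / 2) * β₂ ^ (-(q - 2) / 2)) * ht_exp
  have h2q : 2 * q - 2 ≠ 0 := by
    intro h
    exact hq (by linarith)
  rw [hA, mul_rpow (by positivity) hB.le, ← rpow_mul ht.le, mul_one_div_cancel h2q, rpow_one,
    rpow_neg hB.le, mul_assoc, mul_inv_cancel₀ (rpow_pos_of_pos hB _).ne', mul_one]

theorem MaZhao_proportionality_general (n : ℕ) (q μ₁ μ₂ β₁ β₂ : ℝ)
    (hq : 1 < q)
    (hμ₁ : μ₁ < 0) (hβ₁ : 0 < β₁) (hβ₂ : 0 < β₂)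
    (hrel : μ₁ * β₁ ^ (q - 1) = μ₂ * β₂ ^ (q - 1))
    (hpos₁ : 0 < β₁ ^ ((q - 2) / 2) * μ₁ + β₂ ^ (q / 2))
    (u u' u'' v v' v'' : ℝ → ℝ)
    (hsol : IsPosSolMZ n q μ₁ μ₂ β₁ β₂ u u' u'' v v' v'') :
    ∀ r : ℝ, 0 ≤ r →
      u r = (μ₂ + β₁ ^ (q / 2) * β₂ ^ (-(q - 2) / 2)) ^ (1 / (2 * q - 2)) *
        (μ₁ + β₂ ^ (q / 2) * β₁ ^ (-(q - 2) / 2)) ^ (-(1 / (2 * q - 2))) * v r := by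
  set t := √(β₁ / β₂)
  have ht : 0 < t := sqrt_pos.mpr (div_pos hβ₁ hβ₂)
  have hβ : β₁ = β₂ * t ^ 2 := by
    rw [sq_sqrt (div_pos hβ₁ hβ₂).le, mul_div_cancel₀ _ hβ₂.ne']
  have hμ : μ₂ = μ₁ * t ^ (2 * q - 2) := by
    rw [rpow_eq_of_eq_mul_sq hβ₂.le ht.le hβ, show 2 * (q - 1) = 2 * q - 2 by ring] at hrel
    exact mul_right_cancel₀ (rpow_pos_of_pos hβ₂ (q - 1)).ne' (by linear_combination -hrel)
  rw [proportionality_constant_eq hq.ne' hβ₂ ht hβ hμ hpos₁]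
  exact hsol.eq_const_mul (by linarith) hμ₁.le hβ₂.le ht hβ hμ

/-- Theorem 2 of Ma–Zhao: under the stated conditions on `μ₁, μ₂, β₁, β₂, q`, every
positive solution `(u,v)` of the Ma–Zhao system satisfies
`u = (μ₂ + β₁^{q/2} β₂^{-(q-2)/2})^{1/(2q-2)} (μ₁ + β₂^{q/2} β₁^{-(q-2)/2})^{-1/(2q-2)} v`. -/
theorem MaZhao_proportionality (n : ℕ) (hn : 1 ≤ n) (q μ₁ μ₂ β₁ β₂ : ℝ)
    (hq : 1 < q) (hqsub : 3 ≤ n → q < (n : ℝ) / ((n : ℝ) - 2))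
    (hμ₁ : μ₁ < 0) (hμ₂ : μ₂ < 0) (hβ₁ : 0 < β₁) (hβ₂ : 0 < β₂)
    (hrel : μ₁ * β₁ ^ (q - 1) = μ₂ * β₂ ^ (q - 1))
    (hpos₁ : 0 < β₁ ^ ((q - 2) / 2) * μ₁ + β₂ ^ (q / 2))
    (hpos₂ : 0 < β₂ ^ ((q - 2) / 2) * μ₂ + β₁ ^ (q / 2))
    (u u' u'' v v' v'' : ℝ → ℝ)
    (hsol : IsPosSolMZ n q μ₁ μ₂ β₁ β₂ u u' u'' v v' v'') :
    ∀ r : ℝ, 0 ≤ r →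
      u r = (μ₂ + β₁ ^ (q / 2) * β₂ ^ (-(q - 2) / 2)) ^ (1 / (2 * q - 2)) *
        (μ₁ + β₂ ^ (q / 2) * β₁ ^ (-(q - 2) / 2)) ^ (-(1 / (2 * q - 2))) * v r :=
  MaZhao_proportionality_general n q μ₁ μ₂ β₁ β₂ hq hμ₁ hβ₁ hβ₂ hrel hpos₁ u u' u'' v v' v'' hsol
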